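/- arXiv:2206.06450 — 2 statements merged into one kernel-verified Lean document; each statement's English description precedes it below -/
import Mathlib

section
/- For the circular normal prior with exponential detection and allocation φ(r) = max(0, H√T - r²/(2σ²)), the probability of detection equals 1 - (1 + H√T)e^{-H√T}. -/
/-! The substitution `u = r² / (2σ²)` turns the radial part of the Gaussian density into the
exponential density `e^{-u} du` (the angular factor `1 / (2π)` integrates to `1`). In the new
variable the detection probability `1 - e^{-max 0 (a - u)}` vanishes for `u ≥ a = H√T`, and on
`[0, a]` the integrand is `e^{-u} - e^{-a}`, whose integral is `1 - e^{-a} - a e^{-a}`. -/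

open MeasureTheory Set Real

lemma integral_Ioi_comp_sq_mul_self (g : ℝ → ℝ) :
    ∫ r in Ioi 0, g (r ^ 2) * r = 2⁻¹ * ∫ u in Ioi 0, g u := by
  rw [← integral_comp_rpow_Ioi_of_pos (g := g) two_pos, ← integral_const_mul]
  congr 1 with r
  norm_num [rpow_two]
  ring

lemma integral_Ioi_comp_sq_div_mul_self (g : ℝ → ℝ) {c : ℝ} (hc : 0 < c) :
    ∫ r in Ioi 0, g (r ^ 2 / c) * r = c / 2 * ∫ u in Ioi 0, g u := by
  have hscale : ∫ u in Ioi 0, g (u / c) = c * ∫ u in Ioi 0, g u := by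
    simp_rw [div_eq_inv_mul]
    rw [integral_comp_mul_left_Ioi _ _ (inv_pos.mpr hc), mul_zero, smul_eq_mul, inv_inv]
  rw [integral_Ioi_comp_sq_mul_self (fun u => g (u / c)), hscale]
  ring

lemma integral_Ioi_one_sub_exp_neg_max_mul_exp_neg {a : ℝ} (ha : 0 ≤ a) :
    ∫ u in Ioi 0, (1 - exp (-max 0 (a - u))) * exp (-u) = 1 - (1 + a) * exp (-a) := by
  have hcore : ∀ u ≤ a, (1 - exp (-max 0 (a - u))) * exp (-u) = exp (-u) - exp (-a) := by
    intro u hu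
    rw [max_eq_right (sub_nonneg.mpr hu), sub_mul, one_mul, ← exp_add]
    ring_nf
  have htail : ∀ u ∈ Ioi 0 \ Ioc 0 a, (1 - exp (-max 0 (a - u))) * exp (-u) = 0 := by
    rintro u ⟨hpos, hnot⟩
    have hau : a < u := not_le.mp fun h => hnot ⟨hpos, h⟩
    simp [max_eq_left (sub_nonpos.mpr hau.le)]
  rw [setIntegral_eq_of_subset_of_forall_sdiff_eq_zero measurableSet_Ioi Ioc_subset_Ioi_self htail,
    ← intervalIntegral.integral_of_le ha,
    intervalIntegral.integral_congr (g := fun u => exp (-u) - exp (-a))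
      (fun u hu => hcore u (by simpa [ha] using hu.2)),
    intervalIntegral.integral_sub ((by fun_prop : Continuous fun u => exp (-u)).intervalIntegrable _ _)
      intervalIntegrable_const,
    intervalIntegral.integral_comp_neg, integral_exp, intervalIntegral.integral_const]
  simp only [neg_zero, exp_zero, sub_zero, smul_eq_mul]
  ring

theorem stmt17_general (σ H T : ℝ) (hσ : 0 < σ) (hH : 0 < H) :
    (∫ θ in (0:ℝ)..(2 * Real.pi), ∫ r in Set.Ioi (0:ℝ),
        (1 - Real.exp (-(max 0 (H * Real.sqrt T - r^2 / (2 * σ^2)))))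
          * (1 / (2 * Real.pi * σ^2)) * Real.exp (-(r^2 / (2 * σ^2))) * r)
      = 1 - (1 + H * Real.sqrt T) * Real.exp (-(H * Real.sqrt T)) := by
  set a := H * sqrt T
  have ha : 0 ≤ a := mul_nonneg hH.le (sqrt_nonneg T)
  have hradial : ∫ r in Ioi 0, (1 - exp (-max 0 (a - r ^ 2 / (2 * σ ^ 2))))
        * (1 / (2 * π * σ ^ 2)) * exp (-(r ^ 2 / (2 * σ ^ 2))) * r
      = (2 * π)⁻¹ * (1 - (1 + a) * exp (-a)) := by
    have hc : 0 < 2 * σ ^ 2 := by positivity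
    calc _ = ∫ r in Ioi 0, 1 / (2 * π * σ ^ 2) *
            ((1 - exp (-max 0 (a - r ^ 2 / (2 * σ ^ 2)))) * exp (-(r ^ 2 / (2 * σ ^ 2))) * r) := by
          congr 1 with r
          ring
      _ = (2 * π)⁻¹ * (1 - (1 + a) * exp (-a)) := by
        rw [integral_const_mul,
          integral_Ioi_comp_sq_div_mul_self (fun u => (1 - exp (-max 0 (a - u))) * exp (-u)) hc,
          integral_Ioi_one_sub_exp_neg_max_mul_exp_neg ha]
        field_simp
  rw [intervalIntegral.integral_congr (fun _ _ => hradial), intervalIntegral.integral_const,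
    smul_eq_mul, sub_zero]
  field_simp

/-- For the circular normal prior with exponential detection and allocation
`φ(r) = max 0 (H√T - r²/(2σ²))`, the probability of detection, written in polar
coordinates, equals `1 - (1 + H√T) e^{-H√T}`. -/
theorem stmt17 (σ H T : ℝ) (hσ : 0 < σ) (hH : 0 < H) (hT : 0 < T) :
    (∫ θ in (0:ℝ)..(2 * Real.pi), ∫ r in Set.Ioi (0:ℝ),
        (1 - Real.exp (-(max 0 (H * Real.sqrt T - r^2 / (2 * σ^2)))))
          * (1 / (2 * Real.pi * σ^2)) * Real.exp (-(r^2 / (2 * σ^2))) * r)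
      = 1 - (1 + H * Real.sqrt T) * Real.exp (-(H * Real.sqrt T)) :=
  stmt17_general σ H T hσ hH
end

section
/- For the detection function d(x,y) = 1 - e^{-x²y} (regular but non-homogeneous) with prior π, the unnormalized posterior on the searched region D_λ = {x : λ ≤ x²π(x)} equals λ/x², which is not constant in x; hence the constant-posterior property fails for general regular detection functions. -/
/-! The region condition `λ ≤ x² π(x)` makes `π(x) > 0` and `λ / (x² π(x)) > 0`, so the
logarithm in `φ` is a genuine one and `e^{-x² φ(x)} = λ / (x² π(x))`; multiplying by `π(x)`
leaves `λ / x²`. Since `t ↦ λ / t` is injective, `λ / x²` determines `x²`, i.e. `|x|`. -/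

theorem Real.exp_neg_mul_neg_one_div_mul_log {a b : ℝ} (ha : a ≠ 0) (hb : 0 < b) :
    Real.exp (-a * (-(1 / a) * Real.log b)) = b := by
  rw [show -a * (-(1 / a) * Real.log b) = Real.log b by field_simp, Real.exp_log hb]

theorem div_sq_eq_div_sq_iff_abs_eq {c x y : ℝ} (hc : c ≠ 0) :
    c / x ^ 2 = c / y ^ 2 ↔ |x| = |y| := by
  rw [div_eq_mul_inv, div_eq_mul_inv, mul_right_inj' hc, inv_inj, sq_eq_sq_iff_abs_eq_abs]

theorem exp_mul_eq_div_sq_of_le_sq_mul {π : ℝ → ℝ} {lam x : ℝ} (hlam : 0 < lam) (hx : x ≠ 0)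
    (hle : lam ≤ x ^ 2 * π x) :
    Real.exp (-(x ^ 2) * (-(1 / x ^ 2) * Real.log (lam / (x ^ 2 * π x)))) * π x
      = lam / x ^ 2 := by
  have hx2 : 0 < x ^ 2 := by positivity
  have hπ : 0 < π x := pos_of_mul_pos_right (hlam.trans_le hle) hx2.le
  rw [Real.exp_neg_mul_neg_one_div_mul_log hx2.ne' (by positivity)]
  field_simp

/-- For the regular (but non-homogeneous) detection function `d(x,y) = 1 - e^{-x² y}`
with prior `π`, the unnormalized posterior on the searched region
`D_λ = {x : λ ≤ x² π x}` equals `λ/x²`, which is not constant in `x`: it differs at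
two points of the region with distinct absolute values. -/
theorem stmt19 (π : ℝ → ℝ) (lam : ℝ) (hlam : 0 < lam) :
    (∀ x : ℝ, x ≠ 0 → lam ≤ x^2 * π x →
        Real.exp (-(x^2) * (-(1 / x^2) * Real.log (lam / (x^2 * π x)))) * π x
          = lam / x^2) ∧
    ∀ x y : ℝ, x ≠ 0 → y ≠ 0 → lam ≤ x^2 * π x → lam ≤ y^2 * π y →
      |x| ≠ |y| → lam / x^2 ≠ lam / y^2 :=
  ⟨fun _ hx hle => exp_mul_eq_div_sq_of_le_sq_mul hlam hx hle,
    fun _ _ _ _ _ _ hne => (div_sq_eq_div_sq_iff_abs_eq hlam.ne').not.mpr hne⟩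
end
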